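/- With the notation of the Sobolev-type connection formula, the q-derivative of S_n at the mass point α satisfies (D_q S_n)(α;q) = [n]_q H_{n-1}(α;q) / (1 + λ K_{n-1,q}^{(1,1)}(α,α)). -/

import Mathlib

/-
Write `ψ p = (D_q p)(α)`. Since `S_{n+1} - H_{n+1}` has degree `≤ n`, it is the sum of its Fourier
coefficients `⟨S_{n+1} - H_{n+1}, H_k⟩ / h_k` against `H_0, …, H_n`, and Sobolev orthogonality of
`S_{n+1}` to `H_k` turns each of these into `-λ ψ(S_{n+1}) ψ(H_k) / h_k`. Applying `ψ` gives
`ψ(S_{n+1}) (1 + λ K) = ψ(H_{n+1})`, and `D_q H_{n+1} = [n+1]_q H_n`.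

The orthogonality of the `H_k` follows, by induction along the three-term recurrence, from the
vanishing of the Jackson integral of `H_{n+1} w` over `[-1, 1]`. That integral telescopes: by the
backward shift identity `q^n (1 - q²x²) H_n(x) = q^n H_n(qx) - qx H_{n+1}(qx)` and
`w(x) = (1 - q²x²) w(qx)`, the function `(q - 1) q^n (1 - x²) w(x) H_n(x / q)` is a
q-antiderivative of `H_{n+1} w` vanishing at `±1`. Here `w(x) = ∏_{j ≥ 1} (1 - x² q^{2j})`, which
lies in `(0, 1]` on `[-1, 1]`.
-/

open Polynomial Finset Filter Topology

structure IsThreeTermRecurrence {R : Type*} [CommRing R] (b : ℕ → R) (H : ℕ → R[X]) : Prop where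
  zero : H 0 = 1
  one : H 1 = X
  succ_succ (n : ℕ) : H (n + 2) = X * H (n + 1) - C (b n) * H n

namespace IsThreeTermRecurrence

variable {R : Type*} [CommRing R] {b : ℕ → R} {H : ℕ → R[X]}

theorem monic_and_natDegree_eq [Nontrivial R] (hH : IsThreeTermRecurrence b H) (n : ℕ) :
    (H n).Monic ∧ (H n).natDegree = n := by
  induction n using Nat.twoStepInduction with
  | zero => simp [hH.zero]
  | one => simp [hH.one]
  | more n ih₀ ih₁ =>
    have hXH : (X * H (n + 1)).natDegree = n + 2 := by
      rw [monic_X.natDegree_mul ih₁.1, natDegree_X, ih₁.2]; ring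
    have hlt : (C (b n) * H n).natDegree < (X * H (n + 1)).natDegree :=
      (natDegree_C_mul_le _ _).trans_lt (by omega)
    rw [hH.succ_succ]
    exact ⟨(monic_X.mul ih₁.1).sub_of_left (degree_lt_degree hlt),
      by rw [natDegree_sub_eq_left_of_natDegree_lt hlt, hXH]⟩

theorem degree_eq [Nontrivial R] (hH : IsThreeTermRecurrence b H) (n : ℕ) :
    (H n).degree = n := by
  rw [degree_eq_natDegree (hH.monic_and_natDegree_eq n).1.ne_zero, (hH.monic_and_natDegree_eq n).2]

theorem X_mul_succ (hH : IsThreeTermRecurrence b H) (n : ℕ) :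
    X * H (n + 1) = H (n + 2) + C (b n) * H n := by
  rw [hH.succ_succ]; ring

theorem eval_succ_succ (hH : IsThreeTermRecurrence b H) (n : ℕ) (x : R) :
    (H (n + 2)).eval x = x * (H (n + 1)).eval x - b n * (H n).eval x := by
  simp [hH.succ_succ]

theorem map_mul (hH : IsThreeTermRecurrence b H) (L : R[X] →ₗ[R] R)
    (hL : ∀ n, L (H (n + 1)) = 0) (n m : ℕ) :
    L (H n * H m) = if n = m then (∏ i ∈ range n, b i) * L 1 else 0 := by
  have hC (c : R) (p : R[X]) : L (C c * p) = c * L p := by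
    rw [← smul_eq_C_mul, map_smul, smul_eq_mul]
  induction n using Nat.twoStepInduction generalizing m with
  | zero =>
    rcases m with _ | m
    · simp [hH.zero]
    · simp [hH.zero, hL]
  | one =>
    rcases m with _ | m
    · simp [hH.zero, hL 0]
    · rw [hH.one, hH.X_mul_succ, map_add, hC, hL]
      rcases m with _ | m
      · simp [hH.zero]
      · simp [hL]
  | more n ih₀ ih₁ =>
    rcases m with _ | m
    · simp [hH.zero, hL]
    have hprod : H (n + 2) * H (m + 1) =
        H (n + 1) * H (m + 2) + C (b m) * (H (n + 1) * H m) - C (b n) * (H n * H (m + 1)) := by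
      rw [hH.succ_succ n, hH.succ_succ m]; ring
    rw [hprod, map_sub, map_add, hC, hC, ih₁, ih₁, ih₀]
    simp only [prod_range_succ]
    split_ifs <;> first | omega | (subst_vars; ring)

end IsThreeTermRecurrence

section Orthogonal

variable {K : Type*} [Field K]

theorem eq_sum_smul_of_orthogonal (L : K[X] →ₗ[K] K) {H : ℕ → K[X]} (hdeg : ∀ k, (H k).degree = k)
    {h : ℕ → K} (horth : ∀ j k, L (H j * H k) = if j = k then h k else 0) (hh : ∀ k, h k ≠ 0)
    {m : ℕ} {p : K[X]} (hp : p.degree < m) :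
    p = ∑ k ∈ range m, (L (p * H k) / h k) • H k := by
  let S : Sequence K := ⟨H, hdeg⟩
  have hspan : p ∈ Submodule.span K (H '' Set.Iio m) := by
    rw [show H = ⇑S from rfl, S.span_degreeLT fun i _ ↦ ?_, mem_degreeLT]
    · exact hp
    · exact isUnit_iff_ne_zero.mpr (leadingCoeff_ne_zero.mpr (S.ne_zero i))
  clear hp
  induction hspan using Submodule.span_induction with
  | mem p hp =>
    obtain ⟨j, hj, rfl⟩ := hp
    simp [horth, ite_div, hh, Set.mem_Iio.mp hj]
  | zero => simp
  | add p r _ _ hp hr =>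
    conv_lhs => rw [hp, hr]
    simp only [add_mul, map_add, add_div, add_smul, sum_add_distrib]
  | smul c p _ hp =>
    conv_lhs => rw [hp]
    simp only [smul_mul_assoc, map_smul, smul_eq_mul, mul_div_assoc, mul_smul, smul_sum]

theorem sobolev_mul_one_add_kernel (L ψ : K[X] →ₗ[K] K) {H : ℕ → K[X]}
    (hdeg : ∀ k, (H k).degree = k) {h : ℕ → K}
    (horth : ∀ j k, L (H j * H k) = if j = k then h k else 0) (hh : ∀ k, h k ≠ 0)
    (lam : K) {m : ℕ} (hHm : (H m).Monic) {S : K[X]} (hS : S.Monic) (hSdeg : S.natDegree = m)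
    (hSorth : ∀ p : K[X], p.natDegree < m → L (S * p) + lam * ψ S * ψ p = 0) :
    ψ S * (1 + lam * ∑ k ∈ range m, ψ (H k) ^ 2 / h k) = ψ (H m) := by
  have hSdeg' : S.degree = m := by rw [degree_eq_natDegree hS.ne_zero, hSdeg]
  have hdeg_sub : (S - H m).degree < m := hSdeg' ▸ degree_sub_lt_left
    (hSdeg'.trans (hdeg m).symm) hS.ne_zero (hS.leadingCoeff.trans hHm.leadingCoeff.symm)
  have hcoeff : ∀ k ∈ range m, L ((S - H m) * H k) = -(lam * ψ S * ψ (H k)) := by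
    intro k hk
    have hk : k < m := mem_range.mp hk
    rw [sub_mul, map_sub, horth, if_neg hk.ne', sub_zero, eq_neg_iff_add_eq_zero]
    exact hSorth _ (by rw [natDegree_eq_of_degree_eq_some (hdeg k)]; exact hk)
  have hexp := congrArg ψ (eq_sum_smul_of_orthogonal L hdeg horth hh hdeg_sub)
  rw [map_sub, map_sum] at hexp
  simp only [map_smul, smul_eq_mul] at hexp
  have hsum : ∑ k ∈ range m, L ((S - H m) * H k) / h k * ψ (H k) =
      -(lam * ψ S * ∑ k ∈ range m, ψ (H k) ^ 2 / h k) := by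
    rw [mul_sum, ← sum_neg_distrib]
    refine sum_congr rfl fun k hk ↦ ?_
    rw [hcoeff k hk]
    ring
  linear_combination hexp + hsum

end Orthogonal

noncomputable def jacksonIntegral (q : ℝ) (f : ℝ → ℝ) : ℝ :=
  (1 - q) * ∑' k : ℕ, q ^ k * (f (q ^ k) + f (-q ^ k))

section Jackson

variable {q : ℝ}

theorem pow_and_neg_pow_mem_Icc (hq0 : 0 ≤ q) (hq1 : q ≤ 1) (k : ℕ) :
    q ^ k ∈ Set.Icc (-1 : ℝ) 1 ∧ -q ^ k ∈ Set.Icc (-1 : ℝ) 1 := by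
  have h0 := pow_nonneg hq0 k
  have h1 := pow_le_one₀ hq0 hq1 (n := k)
  exact ⟨⟨by linarith, h1⟩, ⟨by linarith, by linarith⟩⟩

theorem summable_jackson_of_bounded (hq0 : 0 ≤ q) (hq1 : q < 1) {f : ℝ → ℝ} {M : ℝ}
    (hf : ∀ x ∈ Set.Icc (-1 : ℝ) 1, |f x| ≤ M) :
    Summable fun k : ℕ ↦ q ^ k * (f (q ^ k) + f (-q ^ k)) := by
  refine ((summable_geometric_of_lt_one hq0 hq1).mul_left (2 * M)).of_norm_bounded fun k ↦ ?_
  obtain ⟨hk, hk'⟩ := pow_and_neg_pow_mem_Icc hq0 hq1.le k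
  rw [Real.norm_eq_abs, abs_mul, abs_of_nonneg (pow_nonneg hq0 k)]
  nlinarith [abs_add_le (f (q ^ k)) (f (-q ^ k)), hf _ hk, hf _ hk', pow_nonneg hq0 k]

theorem summable_jackson_eval_mul (hq0 : 0 ≤ q) (hq1 : q < 1) {w : ℝ → ℝ} {M : ℝ}
    (hw : ∀ x ∈ Set.Icc (-1 : ℝ) 1, |w x| ≤ M) (p : ℝ[X]) :
    Summable fun k : ℕ ↦ q ^ k * (p.eval (q ^ k) * w (q ^ k) + p.eval (-q ^ k) * w (-q ^ k)) := by
  obtain ⟨C, hC⟩ := isCompact_Icc.exists_bound_of_continuousOn (p.continuous (R := ℝ)).continuousOn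
  refine summable_jackson_of_bounded hq0 hq1 (f := fun x ↦ p.eval x * w x) (M := C * M)
    fun x hx ↦ ?_
  have hpx : |p.eval x| ≤ C := hC x hx
  rw [abs_mul]
  exact mul_le_mul hpx (hw x hx) (abs_nonneg _) ((abs_nonneg _).trans hpx)

theorem jacksonIntegral_add {f g : ℝ → ℝ}
    (hf : Summable fun k : ℕ ↦ q ^ k * (f (q ^ k) + f (-q ^ k)))
    (hg : Summable fun k : ℕ ↦ q ^ k * (g (q ^ k) + g (-q ^ k))) :
    jacksonIntegral q (fun x ↦ f x + g x) = jacksonIntegral q f + jacksonIntegral q g := by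
  unfold jacksonIntegral
  rw [← mul_add, ← hf.tsum_add hg]
  congr 1
  exact tsum_congr fun k ↦ by ring

theorem jacksonIntegral_const_mul (c : ℝ) (f : ℝ → ℝ) :
    jacksonIntegral q (fun x ↦ c * f x) = c * jacksonIntegral q f := by
  have : ∑' k : ℕ, q ^ k * (c * f (q ^ k) + c * f (-q ^ k)) =
      c * ∑' k : ℕ, q ^ k * (f (q ^ k) + f (-q ^ k)) := by
    rw [← tsum_mul_left]
    exact tsum_congr fun k ↦ by ring
  simp only [jacksonIntegral, this]
  ring

theorem isLinearMap_jacksonIntegral_eval_mul (hq0 : 0 ≤ q) (hq1 : q < 1) {w : ℝ → ℝ} {M : ℝ}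
    (hw : ∀ x ∈ Set.Icc (-1 : ℝ) 1, |w x| ≤ M) :
    IsLinearMap ℝ fun p : ℝ[X] ↦ jacksonIntegral q fun x ↦ p.eval x * w x where
  map_add p r := by
    simp only [eval_add, add_mul]
    exact jacksonIntegral_add (summable_jackson_eval_mul hq0 hq1 hw p)
      (summable_jackson_eval_mul hq0 hq1 hw r)
  map_smul c p := by
    simp only [eval_smul, smul_eq_mul, mul_assoc]
    exact jacksonIntegral_const_mul c _

theorem jacksonIntegral_pos (hq0 : 0 ≤ q) (hq1 : q < 1) {f : ℝ → ℝ}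
    (hf : ∀ x ∈ Set.Icc (-1 : ℝ) 1, 0 < f x)
    (hsum : Summable fun k : ℕ ↦ q ^ k * (f (q ^ k) + f (-q ^ k))) :
    0 < jacksonIntegral q f := by
  have hterm (k : ℕ) : 0 < f (q ^ k) + f (-q ^ k) :=
    have hk := pow_and_neg_pow_mem_Icc hq0 hq1.le k
    add_pos (hf _ hk.1) (hf _ hk.2)
  exact mul_pos (sub_pos.mpr hq1) <| hsum.tsum_pos
    (fun k ↦ mul_nonneg (pow_nonneg hq0 k) (hterm k).le) 0 (by simpa using hterm 0)

/-- q-analogue of the fundamental theorem of calculus on `[-1, 1]`. -/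
theorem jacksonIntegral_eq_sub (hq0 : 0 ≤ q) (hq1 : q < 1) {F g : ℝ → ℝ}
    (hF : ∀ x ∈ Set.Icc (-1 : ℝ) 1, F (q * x) - F x = (q - 1) * x * g x)
    (hsum : Summable fun k : ℕ ↦ q ^ k * (g (q ^ k) + g (-q ^ k)))
    (hlim : Tendsto (fun N : ℕ ↦ F (q ^ N) - F (-q ^ N)) atTop (𝓝 0)) :
    jacksonIntegral q g = F 1 - F (-1) := by
  have htel (N : ℕ) : (q - 1) * ∑ k ∈ range N, q ^ k * (g (q ^ k) + g (-q ^ k)) =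
      (F (q ^ N) - F (-q ^ N)) - (F 1 - F (-1)) := by
    have := sum_range_sub (fun k ↦ F (q ^ k) - F (-q ^ k)) N
    simp only [pow_zero] at this
    rw [← this, mul_sum]
    refine sum_congr rfl fun k _ ↦ ?_
    obtain ⟨hk, hk'⟩ := pow_and_neg_pow_mem_Icc hq0 hq1.le k
    have h₁ := hF _ hk
    have h₂ := hF _ hk'
    rw [mul_neg] at h₂
    rw [pow_succ']
    linear_combination -h₁ + h₂
  have hlim' : Tendsto (fun N : ℕ ↦ (q - 1) * ∑ k ∈ range N, q ^ k * (g (q ^ k) + g (-q ^ k)))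
      atTop (𝓝 (0 - (F 1 - F (-1)))) := by
    simp_rw [htel]
    exact hlim.sub_const _
  have := tendsto_nhds_unique (hsum.hasSum.tendsto_sum_nat.const_mul (q - 1)) hlim'
  unfold jacksonIntegral
  linear_combination -this

end Jackson

noncomputable def qHermiteWeight (q x : ℝ) : ℝ := ∏' j : ℕ, (1 - (x * q ^ (j + 1)) ^ 2)

section Weight

variable {q : ℝ}

theorem summable_norm_mul_pow_succ (hq0 : 0 ≤ q) (hq1 : q < 1) (c : ℝ) :
    Summable fun j : ℕ ↦ ‖c * q ^ (j + 1)‖ := by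
  refine ((summable_geometric_of_lt_one hq0 hq1).mul_left (|c| * q)).congr fun j ↦ ?_
  rw [Real.norm_eq_abs, abs_mul, abs_of_nonneg (pow_nonneg hq0 _), pow_succ]
  ring

theorem multipliable_one_add_mul_pow_succ (hq0 : 0 ≤ q) (hq1 : q < 1) (c : ℝ) :
    Multipliable fun j : ℕ ↦ 1 + c * q ^ (j + 1) :=
  multipliable_one_add_of_summable (summable_norm_mul_pow_succ hq0 hq1 c)

theorem tprod_one_add_mul_pow_succ_pos (hq0 : 0 ≤ q) (hq1 : q < 1) {c : ℝ} (hc : |c| ≤ 1) :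
    0 < ∏' j : ℕ, (1 + c * q ^ (j + 1)) := by
  have hfac (j : ℕ) : 0 < 1 + c * q ^ (j + 1) := by
    have hqj : q ^ (j + 1) < 1 := pow_lt_one₀ hq0 hq1 j.succ_ne_zero
    have : |c * q ^ (j + 1)| < 1 := by
      rw [abs_mul, abs_of_nonneg (pow_nonneg hq0 _)]
      nlinarith [abs_nonneg c, pow_nonneg hq0 (j + 1)]
    linarith [neg_abs_le (c * q ^ (j + 1))]
  exact (tprod_nonneg fun j ↦ (hfac j).le).lt_of_ne
    (tprod_one_add_ne_zero_of_summable (fun j ↦ (hfac j).ne')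
      (summable_norm_mul_pow_succ hq0 hq1 c)).symm

theorem tprod_one_sub_mul_tprod_one_add (hq0 : 0 ≤ q) (hq1 : q < 1) (x : ℝ) :
    (∏' j : ℕ, (1 - x * q ^ (j + 1))) * (∏' j : ℕ, (1 + x * q ^ (j + 1))) = qHermiteWeight q x := by
  have hsub := multipliable_one_add_mul_pow_succ hq0 hq1 (-x)
  have hadd := multipliable_one_add_mul_pow_succ hq0 hq1 x
  simp only [neg_mul, ← sub_eq_add_neg] at hsub
  rw [← hsub.tprod_mul hadd]
  exact tprod_congr fun j ↦ by ring

theorem multipliable_qHermiteWeight (hq0 : 0 ≤ q) (hq1 : q < 1) (x : ℝ) :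
    Multipliable fun j : ℕ ↦ 1 - (x * q ^ (j + 1)) ^ 2 := by
  have hsub := multipliable_one_add_mul_pow_succ hq0 hq1 (-x)
  have hadd := multipliable_one_add_mul_pow_succ hq0 hq1 x
  exact (hsub.mul hadd).congr fun j ↦ by ring

theorem qHermiteWeight_neg (x : ℝ) : qHermiteWeight q (-x) = qHermiteWeight q x := by
  simp [qHermiteWeight, neg_mul]

theorem qHermiteWeight_eq_mul (hq0 : 0 ≤ q) (hq1 : q < 1) (x : ℝ) :
    qHermiteWeight q x = (1 - (q * x) ^ 2) * qHermiteWeight q (q * x) := by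
  have h := multipliable_qHermiteWeight hq0 hq1 (q * x)
  rw [qHermiteWeight, tprod_eq_zero_mul' (h.congr fun j ↦ by ring), qHermiteWeight]
  congr 1
  · ring
  · exact tprod_congr fun j ↦ by ring

theorem qHermiteWeight_pos (hq0 : 0 ≤ q) (hq1 : q < 1) {x : ℝ} (hx : x ∈ Set.Icc (-1 : ℝ) 1) :
    0 < qHermiteWeight q x := by
  have hx' : |x| ≤ 1 := abs_le.mpr hx
  rw [← tprod_one_sub_mul_tprod_one_add hq0 hq1]
  have h₁ := tprod_one_add_mul_pow_succ_pos hq0 hq1 (c := -x) (by rwa [abs_neg])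
  simp only [neg_mul, ← sub_eq_add_neg] at h₁
  exact mul_pos h₁ (tprod_one_add_mul_pow_succ_pos hq0 hq1 hx')

theorem abs_qHermiteWeight_le_one (hq0 : 0 ≤ q) (hq1 : q < 1) {x : ℝ}
    (hx : x ∈ Set.Icc (-1 : ℝ) 1) : |qHermiteWeight q x| ≤ 1 := by
  have hfac (j : ℕ) : (x * q ^ (j + 1)) ^ 2 ≤ 1 := by
    rw [mul_pow, ← pow_mul]
    exact mul_le_one₀ (sq_le_one_iff_abs_le_one x |>.mpr (abs_le.mpr hx))
      (pow_nonneg hq0 _) (pow_le_one₀ hq0 hq1.le)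
  rw [abs_of_pos (qHermiteWeight_pos hq0 hq1 hx)]
  exact tprod_le_of_prod_le' le_rfl fun s ↦
    prod_le_one (fun j _ ↦ sub_nonneg.mpr (hfac j)) fun j _ ↦ sub_le_self _ (sq_nonneg _)

theorem jacksonIntegral_qHermiteWeight_pos (hq0 : 0 ≤ q) (hq1 : q < 1) :
    0 < jacksonIntegral q (qHermiteWeight q) :=
  jacksonIntegral_pos hq0 hq1 (fun _ ↦ qHermiteWeight_pos hq0 hq1)
    (summable_jackson_of_bounded hq0 hq1 fun _ ↦ abs_qHermiteWeight_le_one hq0 hq1)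

end Weight

section QHermite

variable {R : Type*} [CommRing R] {q : R} {H : ℕ → R[X]}

theorem qHermite_eval_mul_sub (hH : IsThreeTermRecurrence (fun n ↦ q ^ n * (1 - q ^ (n + 1))) H)
    (n : ℕ) (x : R) :
    (H (n + 1)).eval (q * x) - (H (n + 1)).eval x = -((1 - q ^ (n + 1)) * x * (H n).eval x) := by
  induction n using Nat.twoStepInduction generalizing x with
  | zero => simp [hH.zero, hH.one]; ring
  | one =>
    simp only [hH.eval_succ_succ, hH.one, hH.zero, eval_X, eval_one]
    ring
  | more n ih₀ ih₁ =>
    linear_combination hH.eval_succ_succ (n + 1) (q * x) - hH.eval_succ_succ (n + 1) x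
      + q * x * ih₁ x - (q ^ (n + 1) * (1 - q ^ (n + 2))) * ih₀ x
      + (q * (1 - q ^ (n + 2)) * x) * hH.eval_succ_succ n x

theorem qHermite_backward_shift
    (hH : IsThreeTermRecurrence (fun n ↦ q ^ n * (1 - q ^ (n + 1))) H) (n : ℕ) (x : R) :
    q ^ n * (1 - (q * x) ^ 2) * (H n).eval x =
      q ^ n * (H n).eval (q * x) - q * x * (H (n + 1)).eval (q * x) := by
  induction n using Nat.twoStepInduction generalizing x with
  | zero => simp [hH.zero, hH.one]; ring
  | one =>
    simp only [hH.eval_succ_succ, hH.one, hH.zero, eval_X, eval_one]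
    ring
  | more n ih₀ ih₁ =>
    linear_combination (q ^ (n + 2) * (1 - (q * x) ^ 2)) * hH.eval_succ_succ n x
      + (q * x) * ih₁ x - (q ^ 2 * (q ^ n * (1 - q ^ (n + 1)))) * ih₀ x
      + (q * x) * hH.eval_succ_succ (n + 1) (q * x) - q ^ (n + 2) * hH.eval_succ_succ n (q * x)

end QHermite

theorem jacksonIntegral_qHermite_succ_mul_weight_eq_zero {q : ℝ} (hq0 : 0 < q) (hq1 : q < 1)
    {H : ℕ → ℝ[X]} (hH : IsThreeTermRecurrence (fun n ↦ q ^ n * (1 - q ^ (n + 1))) H) (n : ℕ) :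
    jacksonIntegral q (fun x ↦ (H (n + 1)).eval x * qHermiteWeight q x) = 0 := by
  -- a q-antiderivative of `H (n + 1) * w`, read off from the backward shift identity
  set F : ℝ → ℝ := fun x ↦
    (q - 1) * q ^ n * ((1 - x ^ 2) * qHermiteWeight q x * (H n).eval (x / q))
  have hF (x : ℝ) (_ : x ∈ Set.Icc (-1 : ℝ) 1) :
      F (q * x) - F x = (q - 1) * x * ((H (n + 1)).eval x * qHermiteWeight q x) := by
    have hshift := qHermite_backward_shift hH n (x / q)
    rw [mul_div_cancel₀ x hq0.ne'] at hshift
    simp only [F, mul_div_cancel_left₀ x hq0.ne', ← qHermiteWeight_eq_mul hq0.le hq1]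
    linear_combination (1 - q) * qHermiteWeight q x * hshift
  have hlim : Tendsto (fun N : ℕ ↦ F (q ^ N) - F (-q ^ N)) atTop (𝓝 0) := by
    have hdiff : Tendsto (fun N : ℕ ↦ (H n).eval (q ^ N / q) - (H n).eval (-q ^ N / q))
        atTop (𝓝 0) := by
      have hcont : Continuous fun y : ℝ ↦ (H n).eval (y / q) - (H n).eval (-y / q) := by fun_prop
      simpa [Function.comp_def] using
        (hcont.tendsto 0).comp (tendsto_pow_atTop_nhds_zero_of_lt_one hq0.le hq1)
    have hbdd : IsBoundedUnder (· ≤ ·) atTop fun N : ℕ ↦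
        ‖(q - 1) * q ^ n * ((1 - (q ^ N) ^ 2) * qHermiteWeight q (q ^ N))‖ := by
      refine isBoundedUnder_of ⟨|q - 1| * q ^ n, fun N ↦ ?_⟩
      obtain ⟨hN, -⟩ := pow_and_neg_pow_mem_Icc hq0.le hq1.le N
      have h₁ : |1 - (q ^ N) ^ 2| ≤ 1 := abs_le.mpr ⟨by nlinarith [hN.1, hN.2], by nlinarith⟩
      rw [Real.norm_eq_abs, abs_mul, abs_mul, abs_mul, abs_of_pos (pow_pos hq0 n)]
      exact mul_le_of_le_one_right (by positivity)
        (mul_le_one₀ h₁ (abs_nonneg _) (abs_qHermiteWeight_le_one hq0.le hq1 hN))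
    refine (hdiff.zero_mul_isBoundedUnder_le hbdd).congr fun N ↦ ?_
    simp only [F, neg_sq, qHermiteWeight_neg, neg_div]
    ring
  rw [jacksonIntegral_eq_sub hq0.le hq1 hF ?_ hlim]
  · simp [F]
  · exact summable_jackson_eval_mul hq0.le hq1 (fun _ ↦ abs_qHermiteWeight_le_one hq0.le hq1) _

section QDerivative

variable {K : Type*} [Field K] {q : K} {D : K[X] → K[X]}

theorem qDiff_eq_of_mul_eq (hq : q ≠ 1) (hD : ∀ p, C (q - 1) * X * D p = p.comp (C q * X) - p)
    {p r : K[X]} (hr : C (q - 1) * X * r = p.comp (C q * X) - p) : D p = r :=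
  mul_left_cancel₀ (mul_ne_zero (C_ne_zero.mpr (sub_ne_zero.mpr hq)) X_ne_zero)
    ((hD p).trans hr.symm)

theorem isLinearMap_of_qDiff (hq : q ≠ 1)
    (hD : ∀ p, C (q - 1) * X * D p = p.comp (C q * X) - p) : IsLinearMap K D where
  map_add p r := qDiff_eq_of_mul_eq hq hD <| by rw [mul_add, hD, hD, add_comp]; ring
  map_smul c p := qDiff_eq_of_mul_eq hq hD <| by
    rw [smul_eq_C_mul, smul_eq_C_mul, mul_left_comm, hD, mul_comp, C_comp]; ring

theorem qDiff_qHermite_succ [Infinite K] (hq : q ≠ 1)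
    (hD : ∀ p, C (q - 1) * X * D p = p.comp (C q * X) - p) {H : ℕ → K[X]}
    (hH : IsThreeTermRecurrence (fun n ↦ q ^ n * (1 - q ^ (n + 1))) H) (n : ℕ) :
    D (H (n + 1)) = C ((1 - q ^ (n + 1)) / (1 - q)) * H n := by
  refine qDiff_eq_of_mul_eq hq hD (Polynomial.funext fun x ↦ ?_)
  have h1q : 1 - q ≠ 0 := sub_ne_zero.mpr hq.symm
  simp only [eval_mul, eval_sub, eval_comp, eval_C, eval_X]
  rw [qHermite_eval_mul_sub hH]
  field_simp
  ring

end QDerivative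

theorem qHermite_sobolev_deriv_at_mass_general (q : ℝ) (hq0 : 0 < q) (hq1 : q < 1)
    (lam : ℝ) (hlam : 0 < lam) (α : ℝ)
    (H : ℕ → Polynomial ℝ) (hH0 : H 0 = 1) (hH1 : H 1 = X)
    (hHrec : ∀ n : ℕ, H (n + 2) = X * H (n + 1) - C (q ^ (n + 1 - 1) * (1 - q ^ (n + 1))) * H n)
    (Dq : Polynomial ℝ → Polynomial ℝ)
    (hDq : ∀ p : Polynomial ℝ, C (q - 1) * X * Dq p = p.comp (C q * X) - p)
    (w : ℝ → ℝ)
    (hw : ∀ x : ℝ, w x = (∏' j : ℕ, (1 - x * q ^ (j + 1))) * (∏' j : ℕ, (1 + x * q ^ (j + 1))))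
    (inner : Polynomial ℝ → Polynomial ℝ → ℝ)
    (hinner : ∀ f g : Polynomial ℝ, inner f g =
      (1 - q) * ∑' k : ℕ, q ^ k *
        (f.eval (q ^ k) * g.eval (q ^ k) * w (q ^ k) +
          f.eval (-(q ^ k)) * g.eval (-(q ^ k)) * w (-(q ^ k))))
    (h : ℕ → ℝ) (hh : ∀ m : ℕ, h m = inner (H m) (H m))
    (sInner : Polynomial ℝ → Polynomial ℝ → ℝ)
    (hsInner : ∀ f g : Polynomial ℝ,
      sInner f g = inner f g + lam * (Dq f).eval α * (Dq g).eval α)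
    (S : ℕ → Polynomial ℝ)
    (hSmonic : ∀ n : ℕ, (S n).Monic ∧ (S n).natDegree = n)
    (hSorth : ∀ n : ℕ, ∀ p : Polynomial ℝ, p.natDegree < n → sInner (S n) p = 0) :
    ∀ n : ℕ,
      (Dq (S (n + 1))).eval α =
        (1 - q ^ (n + 1)) / (1 - q) * (H n).eval α /
          (1 + lam * ∑ k ∈ Finset.range (n + 1), ((Dq (H k)).eval α) ^ 2 / h k) := by
  intro n
  have hH : IsThreeTermRecurrence (fun n ↦ q ^ n * (1 - q ^ (n + 1))) H :=
    ⟨hH0, hH1, fun n ↦ by simpa using hHrec n⟩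
  obtain rfl : w = qHermiteWeight q :=
    funext fun x ↦ (hw x).trans (tprod_one_sub_mul_tprod_one_add hq0.le hq1 x)
  let L := (isLinearMap_jacksonIntegral_eval_mul hq0.le hq1
    fun x ↦ abs_qHermiteWeight_le_one hq0.le hq1).mk'
  have hinnerL (f g : ℝ[X]) : inner f g = L (f * g) := by
    simp only [hinner, L, IsLinearMap.mk'_apply, jacksonIntegral, eval_mul]
  have hmap := hH.map_mul L (jacksonIntegral_qHermite_succ_mul_weight_eq_zero hq0 hq1 hH)
  have hpos (k : ℕ) : 0 < h k := by
    rw [hh, hinnerL, hmap, if_pos rfl]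
    refine mul_pos (prod_pos fun i _ ↦ mul_pos (pow_pos hq0 i) ?_) ?_
    · exact sub_pos.mpr (pow_lt_one₀ hq0.le hq1 i.succ_ne_zero)
    · simpa [L] using jacksonIntegral_qHermiteWeight_pos hq0.le hq1
  have horth (j k : ℕ) : L (H j * H k) = if j = k then h k else 0 := by
    rw [hmap, hh, hinnerL, hmap, if_pos rfl]
    split_ifs with hjk <;> simp [hjk]
  let ψ := (leval α).comp (isLinearMap_of_qDiff hq1.ne hDq).mk'
  have key := sobolev_mul_one_add_kernel L ψ hH.degree_eq horth (fun k ↦ (hpos k).ne') lam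
    (hH.monic_and_natDegree_eq (n + 1)).1 (hSmonic (n + 1)).1 (hSmonic (n + 1)).2
    fun p hp ↦ by simpa [hsInner, hinnerL, ψ] using hSorth (n + 1) p hp
  have hK : 0 ≤ ∑ k ∈ range (n + 1), ψ (H k) ^ 2 / h k :=
    sum_nonneg fun k _ ↦ div_nonneg (sq_nonneg _) (hpos k).le
  rw [eq_div_iff (by positivity), ← eval_C_mul, ← qDiff_qHermite_succ hq1.ne hDq hH]
  exact key

/-- The q-derivative of the q-Hermite I-Sobolev type polynomial at the mass point:
`(D_q S_n)(α) = [n]_q H_{n-1}(α) / (1 + λ K_{n-1,q}^{(1,1)}(α,α))`. -/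
theorem qHermite_sobolev_deriv_at_mass (q : ℝ) (hq0 : 0 < q) (hq1 : q < 1)
    (lam : ℝ) (hlam : 0 < lam) (α : ℝ) (hα : α ∉ Set.Icc (-1 : ℝ) 1)
    (H : ℕ → Polynomial ℝ) (hH0 : H 0 = 1) (hH1 : H 1 = X)
    (hHrec : ∀ n : ℕ, H (n + 2) = X * H (n + 1) - C (q ^ (n + 1 - 1) * (1 - q ^ (n + 1))) * H n)
    (Dq : Polynomial ℝ → Polynomial ℝ)
    (hDq : ∀ p : Polynomial ℝ, C (q - 1) * X * Dq p = p.comp (C q * X) - p)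
    (w : ℝ → ℝ)
    (hw : ∀ x : ℝ, w x = (∏' j : ℕ, (1 - x * q ^ (j + 1))) * (∏' j : ℕ, (1 + x * q ^ (j + 1))))
    (inner : Polynomial ℝ → Polynomial ℝ → ℝ)
    (hinner : ∀ f g : Polynomial ℝ, inner f g =
      (1 - q) * ∑' k : ℕ, q ^ k *
        (f.eval (q ^ k) * g.eval (q ^ k) * w (q ^ k) +
          f.eval (-(q ^ k)) * g.eval (-(q ^ k)) * w (-(q ^ k))))
    (h : ℕ → ℝ) (hh : ∀ m : ℕ, h m = inner (H m) (H m))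
    (sInner : Polynomial ℝ → Polynomial ℝ → ℝ)
    (hsInner : ∀ f g : Polynomial ℝ,
      sInner f g = inner f g + lam * (Dq f).eval α * (Dq g).eval α)
    (S : ℕ → Polynomial ℝ)
    (hSmonic : ∀ n : ℕ, (S n).Monic ∧ (S n).natDegree = n)
    (hSorth : ∀ n : ℕ, ∀ p : Polynomial ℝ, p.natDegree < n → sInner (S n) p = 0) :
    ∀ n : ℕ,
      (Dq (S (n + 1))).eval α =
        (1 - q ^ (n + 1)) / (1 - q) * (H n).eval α /
          (1 + lam * ∑ k ∈ Finset.range (n + 1), ((Dq (H k)).eval α) ^ 2 / h k) :=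
  qHermite_sobolev_deriv_at_mass_general q hq0 hq1 lam hlam α H hH0 hH1 hHrec Dq hDq w hw inner
    hinner h hh sInner hsInner S hSmonic hSorth
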